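/- For every integer n ≥ 1: (a) 2^{n−1} · P_{2n} = Σ_{j=0}^{n} C(2n, 2j) · P_{2j}, and (b) 2^{2n−1} · P_{2n} = Σ_{j=0}^{n} C(2n, 2j) · P_{2j} · Q_{2(n−j)}. -/

import Mathlib

/-!
With `α = 1 + √2` and `β = 1 - √2`, both sums reduce to even-index binomial sums
`E(x, y) = ∑ⱼ C(2n, 2j) x^(2j) y^(2(n-j)) = ((x + y)^(2n) + (y - x)^(2n)) / 2`.
Since `α` and `β` are the roots of `t² = 2t + 1`, we have `(1 + t)² = 2t²` and `(1 - t)² = 2`,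
so `E(t, 1) = 2^(n-1) (t^(2n) + 1)`, and (a) follows by subtracting the cases `t = α, β`.
For (b), `(α^(2j) - β^(2j)) (α^(2(n-j)) + β^(2(n-j)))` equals `α^(2n) - β^(2n)` plus the
antisymmetric part `α^(2j) β^(2(n-j)) - β^(2j) α^(2(n-j))`, whose weighted sum vanishes by the
symmetry `E(x, y) = E(y, x)`; what remains is `P_(2n) ∑ⱼ C(2n, 2j) = 2^(2n-1) P_(2n)`.
-/

open Finset

/-- The Pell numbers `P_m = ((1+√2)^m - (1-√2)^m)/(2√2)` (as real numbers). -/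
noncomputable def Pell (k : ℕ) : ℝ :=
  ((1 + Real.sqrt 2) ^ k - (1 - Real.sqrt 2) ^ k) / (2 * Real.sqrt 2)

/-- The Pell–Lucas numbers `Q_m = (1+√2)^m + (1-√2)^m` (as real numbers). -/
noncomputable def PellLucas (k : ℕ) : ℝ :=
  (1 + Real.sqrt 2) ^ k + (1 - Real.sqrt 2) ^ k

theorem sum_range_two_mul_add_one_of_odd_eq_zero {M : Type*} [AddCommMonoid M] (n : ℕ)
    {f : ℕ → M} (hf : ∀ k, Odd k → f k = 0) :
    ∑ k ∈ range (2 * n + 1), f k = ∑ j ∈ range (n + 1), f (2 * j) := by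
  induction n with
  | zero => simp
  | succ n ih =>
    rw [show 2 * (n + 1) + 1 = 2 * n + 1 + 1 + 1 by ring, sum_range_succ, sum_range_succ, ih,
      hf _ (odd_two_mul_add_one n), add_zero, sum_range_succ _ (n + 1)]
    rfl

section EvenBinomial

variable {R : Type*}

theorem two_mul_sum_choose_two_mul [CommRing R] (n : ℕ) (x y : R) :
    2 * ∑ j ∈ range (n + 1), ((2 * n).choose (2 * j) : R) * x ^ (2 * j) * y ^ (2 * (n - j)) =
      (x + y) ^ (2 * n) + (y - x) ^ (2 * n) := by
  rw [add_pow, sub_eq_neg_add, add_pow, ← sum_add_distrib,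
    sum_range_two_mul_add_one_of_odd_eq_zero, mul_sum]
  · refine sum_congr rfl fun j hj => ?_
    rw [show 2 * n - 2 * j = 2 * (n - j) by omega, (even_two_mul j).neg_pow]
    ring
  · intro k hk
    rw [hk.neg_pow]
    ring

theorem sum_choose_two_mul_comm [CommSemiring R] (n : ℕ) (x y : R) :
    ∑ j ∈ range (n + 1), ((2 * n).choose (2 * j) : R) * x ^ (2 * j) * y ^ (2 * (n - j)) =
      ∑ j ∈ range (n + 1), ((2 * n).choose (2 * j) : R) * y ^ (2 * j) * x ^ (2 * (n - j)) := by
  rw [← sum_range_reflect]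
  refine sum_congr rfl fun j hj => ?_
  have hj : j ≤ n := Nat.lt_succ_iff.mp (mem_range.mp hj)
  rw [show n + 1 - 1 - j = n - j by omega, show n - (n - j) = j by omega,
    show 2 * (n - j) = 2 * n - 2 * j by omega, Nat.choose_symm (by omega)]
  ring

theorem two_mul_sum_choose_two_mul_pow_of_sq_eq [CommRing R] {t : R} (ht : t ^ 2 = 2 * t + 1)
    (n : ℕ) :
    2 * ∑ j ∈ range (n + 1), ((2 * n).choose (2 * j) : R) * t ^ (2 * j) =
      2 ^ n * (t ^ (2 * n) + 1) := by
  have h₁ : (t + 1) ^ 2 = 2 * t ^ 2 := by linear_combination -ht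
  have h₂ : (1 - t) ^ 2 = 2 := by linear_combination ht
  simpa [pow_mul, h₁, h₂, mul_pow, mul_add] using two_mul_sum_choose_two_mul n t 1

theorem sum_choose_two_mul_mul_sub_mul_add [CommRing R] (n : ℕ) (x y : R) :
    ∑ j ∈ range (n + 1), ((2 * n).choose (2 * j) : R) *
        ((x ^ (2 * j) - y ^ (2 * j)) * (x ^ (2 * (n - j)) + y ^ (2 * (n - j)))) =
      (x ^ (2 * n) - y ^ (2 * n)) * ∑ j ∈ range (n + 1), ((2 * n).choose (2 * j) : R) := by
  have hsplit : ∀ j ∈ range (n + 1), ((2 * n).choose (2 * j) : R) *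
        ((x ^ (2 * j) - y ^ (2 * j)) * (x ^ (2 * (n - j)) + y ^ (2 * (n - j)))) =
      (x ^ (2 * n) - y ^ (2 * n)) * (2 * n).choose (2 * j) +
        (((2 * n).choose (2 * j) : R) * x ^ (2 * j) * y ^ (2 * (n - j)) -
          ((2 * n).choose (2 * j) : R) * y ^ (2 * j) * x ^ (2 * (n - j))) := by
    intro j hj
    have hj : 2 * n = 2 * j + 2 * (n - j) := by have := mem_range.mp hj; omega
    rw [hj, pow_add, pow_add, ← hj]
    ring
  rw [sum_congr rfl hsplit, sum_add_distrib, sum_sub_distrib, sum_choose_two_mul_comm, sub_self,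
    add_zero, mul_sum]

end EvenBinomial

theorem two_mul_sum_choose_two_mul_eq_two_pow {n : ℕ} (hn : n ≠ 0) :
    2 * ∑ j ∈ range (n + 1), (2 * n).choose (2 * j) = 2 ^ (2 * n) := by
  zify
  simpa [hn] using two_mul_sum_choose_two_mul (R := ℤ) n 1 1

theorem one_add_sqrt_two_sq : (1 + √2) ^ 2 = 2 * (1 + √2) + 1 := by
  linear_combination Real.sq_sqrt zero_le_two

theorem one_sub_sqrt_two_sq : (1 - √2) ^ 2 = 2 * (1 - √2) + 1 := by
  linear_combination Real.sq_sqrt zero_le_two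

/-- `2^(n-1) P_(2n) = ∑_{j=0}^{n} C(2n,2j) P_(2j)` and
`2^(2n-1) P_(2n) = ∑_{j=0}^{n} C(2n,2j) P_(2j) Q_(2(n-j))`. -/
theorem stmt_18 (n : ℕ) (hn : 1 ≤ n) :
    ((2 : ℝ) ^ ((n : ℤ) - 1) * Pell (2 * n) =
        ∑ j ∈ Finset.range (n + 1), ((2 * n).choose (2 * j) : ℝ) * Pell (2 * j)) ∧
      (2 : ℝ) ^ (2 * (n : ℤ) - 1) * Pell (2 * n) =
        ∑ j ∈ Finset.range (n + 1),
          ((2 * n).choose (2 * j) : ℝ) * Pell (2 * j) * PellLucas (2 * (n - j)) := by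
  constructor
  · have hα := two_mul_sum_choose_two_mul_pow_of_sq_eq one_add_sqrt_two_sq n
    have hβ := two_mul_sum_choose_two_mul_pow_of_sq_eq one_sub_sqrt_two_sq n
    rw [zpow_sub_one₀ two_ne_zero, zpow_natCast]
    simp only [Pell, mul_div_assoc', ← sum_div, mul_sub, sum_sub_distrib]
    congr 1
    linear_combination (hβ - hα) / 2
  · have hcentral :
        (2 : ℝ) ^ (2 * (n : ℤ) - 1) = ∑ j ∈ range (n + 1), ((2 * n).choose (2 * j) : ℝ) := by
      have hsum : 2 * ∑ j ∈ range (n + 1), ((2 * n).choose (2 * j) : ℝ) = 2 ^ (2 * n) := by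
        exact_mod_cast two_mul_sum_choose_two_mul_eq_two_pow (n := n) (by omega)
      rw [show 2 * (n : ℤ) - 1 = ((2 * n : ℕ) : ℤ) - 1 by push_cast; ring,
        zpow_sub_one₀ two_ne_zero, zpow_natCast, ← hsum]
      ring
    simp only [Pell, PellLucas, mul_div_assoc', div_mul_eq_mul_div, ← sum_div, mul_assoc,
      sum_choose_two_mul_mul_sub_mul_add, hcentral]
    ring
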